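/- Let v be a node in a 2-cut STT T with parent p and grandparent g, where g has a parent h and grandparent i, and suppose g, h, and i are all separator nodes. Then the splay step at g preserves the 2-cut property. -/

import Mathlib

open SimpleGraph

variable {V : Type*}

/-- Reachability within a vertex set `S`. -/
def reachIn (G : SimpleGraph V) (S : Set V) : V → V → Prop :=
  Relation.ReflTransGen (fun x y => x ∈ S ∧ y ∈ S ∧ G.Adj x y)

/-- The connected component of `v` inside the vertex set `S`. -/
def compIn (G : SimpleGraph V) (S : Set V) (v : V) : Set V :=
  {u | reachIn G S v u}

/-- `IsSearchTree G par S r`: the parent map `par` describes a search tree with root `r`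
on the part of `G` induced by `S`, built recursively: the root `r` is chosen, and each
connected component of `S \ {r}` carries a search tree whose root is a child of `r`. -/
inductive IsSearchTree (G : SimpleGraph V) (par : V → Option V) : Set V → V → Prop where
  | node (S : Set V) (r : V) (ρ : V → V) (hr : r ∈ S)
      (hρ : ∀ v ∈ S, v ≠ r → par (ρ v) = some r)
      (h : ∀ v ∈ S, v ≠ r → IsSearchTree G par (compIn G (S \ {r}) v) (ρ v)) :
      IsSearchTree G par S r

/-- `isAnc par a v`: `a` is an ancestor of `v` (reflexively). -/
def isAnc (par : V → Option V) (a v : V) : Prop :=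
  Relation.ReflTransGen (fun x y => par x = some y) v a

/-- The subtree rooted at `v`: all descendants of `v` (including `v`). -/
def subtree (par : V → Option V) (v : V) : Set V := {u | isAnc par v u}

/-- The outer boundary `∂(T_v)` of the subtree rooted at `v`. -/
def bdry (G : SimpleGraph V) (par : V → Option V) (v : V) : Set V :=
  {x | x ∉ subtree par v ∧ ∃ u ∈ subtree par v, G.Adj x u}

/-- A search tree is 2-cut if every subtree boundary has size at most 2. -/
def TwoCut (G : SimpleGraph V) (par : V → Option V) : Prop :=
  ∀ v, (bdry G par v).ncard ≤ 2

open Classical in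
/-- The STT rotation of `v` with its parent `p`: `p` becomes a child of `v`, `v` takes the
former parent of `p`, and any child `c` of `v` with `p ∈ ∂(T_c)` is reattached to `p`. -/
noncomputable def rotate (G : SimpleGraph V) (par : V → Option V) (v p : V) :
    V → Option V := fun x =>
  if x = v then par p
  else if x = p then some v
  else if par x = some v ∧ p ∈ bdry G par x then some p
  else par x

/-- A splay step at `x`: a single rotation if `x` has no grandparent; a ZIG-ZAG
(two rotations at `x`) if `x` is a separator; a ZIG-ZIG (rotation at the parent,
then at `x`) otherwise. -/
noncomputable def splayStep (G : SimpleGraph V) (par : V → Option V) (x : V) :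
    V → Option V :=
  match par x with
  | none => par
  | some p =>
    match par p with
    | none => rotate G par x p
    | some g =>
      if (bdry G par x).ncard = 2 then
        rotate G (rotate G par x p) x g
      else
        rotate G (rotate G par p g) x p

/-!
Since `g` is a separator, the splay step at `g` is a zig-zag: it rotates `g` over `h` and then
over `i`. So it suffices that rotating a separator `x` over its parent `p` keeps a 2-cut STT a
2-cut STT. The rotation changes only the subtrees of `x` and `p`: the new `T_x` is the old `T_p`,
and the new `T_p` is `(T_p \ T_x) ∪ M`, where `M` is the union of the `T_c` over the children `c`
of `x` with `p ∈ ∂T_c`. Hence the new `∂T_x` is the old `∂T_p`, and the new `∂T_p` lies in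
`{x} ∪ ∂T_p` but misses the second boundary vertex `b` of `T_x`: in a tree `b`, being adjacent to
`T_x`, has no further neighbour in the connected set `T_p`, and a `T_c ⊆ M` adjacent to `b` would
have the three boundary vertices `x`, `p`, `b`. After the first rotation `g` has parent `i` and
boundary `∂T_h`, so it is again a separator and the second rotation is covered as well.
-/

section Reach

variable {G : SimpleGraph V} {S C : Set V} {a b u w z : V}

def ConnectedIn (G : SimpleGraph V) (S : Set V) : Prop :=
  ∀ a ∈ S, ∀ b ∈ S, reachIn G S a b

lemma reachIn.symm (h : reachIn G S a b) : reachIn G S b a := by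
  induction h with
  | refl => exact .refl
  | tail _ h ih => exact .head ⟨h.2.1, h.1, h.2.2.symm⟩ ih

lemma reachIn.mono {S' : Set V} (hS : S ⊆ S') (h : reachIn G S a b) : reachIn G S' a b :=
  Relation.ReflTransGen.mono (fun _ _ h => ⟨hS h.1, hS h.2.1, h.2.2⟩) _ _ h

lemma mem_compIn_self : a ∈ compIn G S a := Relation.ReflTransGen.refl

lemma eq_or_mem_of_mem_compIn (h : b ∈ compIn G S a) : b = a ∨ b ∈ S := by
  rcases Relation.ReflTransGen.cases_tail h with h | ⟨_, _, h⟩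
  exacts [Or.inl h, Or.inr h.2.1]

lemma compIn_subset (ha : a ∈ S) : compIn G S a ⊆ S := fun _ hb =>
  (eq_or_mem_of_mem_compIn hb).elim (· ▸ ha) id

lemma compIn_eq_of_mem (hb : b ∈ compIn G S a) : compIn G S b = compIn G S a := by
  ext u
  exact ⟨fun hu => Relation.ReflTransGen.trans hb hu, fun hu => hb.symm.trans hu⟩

lemma connectedIn_compIn : ConnectedIn G (compIn G S a) := by
  have hreach : ∀ b ∈ compIn G S a, reachIn G (compIn G S a) a b := fun b hb => by
    induction hb with
    | refl => exact .refl
    | tail hab hbc ih => exact ih.tail ⟨hab, hab.tail hbc, hbc.2.2⟩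
  exact fun b hb c hc => (hreach b hb).symm.trans (hreach c hc)

lemma connectedIn_univ (hG : G.Connected) : ConnectedIn G Set.univ := fun a _ b _ =>
  Relation.ReflTransGen.mono (fun _ _ h => ⟨trivial, trivial, h⟩) _ _
    ((SimpleGraph.reachable_iff_reflTransGen a b).1 (hG a b))

lemma reachIn.exists_adj_of_mem_of_notMem (h : reachIn G S u w) (hu : u ∈ C) (hw : w ∉ C) :
    ∃ a ∈ C, ∃ z ∈ S, z ∉ C ∧ G.Adj a z := by
  induction h with
  | refl => exact absurd hu hw
  | @tail y z _ hyz ih =>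
    by_cases hy : y ∈ C
    · exact ⟨y, hy, z, hyz.2.1, hw, hyz.2.2⟩
    · exact ih hy

lemma exists_walk_of_reachIn (h : reachIn G S a b) (ha : a ∈ S) :
    ∃ q : G.Walk a b, ∀ y ∈ q.support, y ∈ S := by
  induction h with
  | refl => exact ⟨.nil, by simpa using ha⟩
  | tail _ hyz ih =>
    obtain ⟨q, hq⟩ := ih
    refine ⟨q.concat hyz.2.2, fun y hy => ?_⟩
    simp only [SimpleGraph.Walk.support_concat, List.mem_append, List.mem_singleton] at hy
    exact hy.elim (hq y) (· ▸ hyz.2.1)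

lemma SimpleGraph.IsAcyclic.eq_of_adj_of_connectedIn (hG : G.IsAcyclic) (hS : ConnectedIn G S)
    (hz : z ∉ S) (ha : a ∈ S) (hb : b ∈ S) (hza : G.Adj z a) (hzb : G.Adj z b) : a = b := by
  classical
  obtain ⟨q, hq⟩ := exists_walk_of_reachIn (hS a ha b hb) ha
  have hzq : z ∉ q.toPath.1.support := fun h => hz (hq z (q.support_toPath_subset_support h))
  have h := congrArg (fun r : G.Path z b => r.1.support)
    ((hG.subsingleton_path z b).elim ⟨.cons hza q.toPath.1, q.toPath.2.cons hzq⟩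
      (SimpleGraph.Path.singleton hzb))
  simp only [SimpleGraph.Path.singleton, SimpleGraph.Walk.support_cons,
    SimpleGraph.Walk.support_nil, List.cons.injEq] at h
  rw [← SimpleGraph.Walk.cons_tail_support, List.cons.injEq] at h
  exact h.2.1

end Reach

section Chains

variable {par par' : V → Option V} {a b u v w x : V}

lemma mem_subtree_self : v ∈ subtree par v := Relation.ReflTransGen.refl

lemma mem_subtree_of_par (h : par u = some w) : u ∈ subtree par w :=
  Relation.ReflTransGen.single h

lemma subtree_subset_of_mem (h : u ∈ subtree par w) : subtree par u ⊆ subtree par w :=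
  fun _ hz => Relation.ReflTransGen.trans hz h

lemma subtree_subset_of_par (h : par u = some w) : subtree par u ⊆ subtree par w :=
  subtree_subset_of_mem (mem_subtree_of_par h)

lemma subtree_subset_of_closed {S : Set V} (hw : w ∈ S)
    (hclosed : ∀ ⦃u b⦄, par u = some b → b ∈ S → u ∈ S) : subtree par w ⊆ S := by
  intro u hu
  induction hu using Relation.ReflTransGen.head_induction_on with
  | refl => exact hw
  | head hub _ ih => exact hclosed hub ih

lemma eq_of_par_self_of_mem_subtree (hu : par u = some u) (h : u ∈ subtree par w) : w = u := by
  induction h with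
  | refl => rfl
  | tail _ hbc ih => exact Option.some_injective _ (hbc.symm.trans (ih ▸ hu))

lemma par_mem_subtree (h : u ∈ subtree par w) (hne : u ≠ w) (hp : par u = some b) :
    b ∈ subtree par w := by
  rcases Relation.ReflTransGen.cases_head h with rfl | ⟨z, hz, hzw⟩
  · exact absurd rfl hne
  · exact Option.some_injective _ (hz.symm.trans hp) ▸ hzw

lemma mem_subtree_or_mem_subtree (ha : u ∈ subtree par a) (hb : u ∈ subtree par b) :
    a ∈ subtree par b ∨ b ∈ subtree par a := by
  induction ha using Relation.ReflTransGen.head_induction_on with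
  | refl => exact Or.inl hb
  | @head u y huy hya ih =>
    rcases Relation.ReflTransGen.cases_head hb with rfl | ⟨z, huz, hzb⟩
    · exact Or.inr (Relation.ReflTransGen.head huy hya)
    · exact ih (Option.some_injective _ (huz.symm.trans huy) ▸ hzb)

lemma exists_child_of_mem_subtree (h : u ∈ subtree par v) (hne : u ≠ v) :
    ∃ c, par c = some v ∧ u ∈ subtree par c := by
  induction h using Relation.ReflTransGen.head_induction_on with
  | refl => exact absurd rfl hne
  | @head u y huy _ ih =>
    by_cases hy : y = v
    · exact ⟨u, hy ▸ huy, mem_subtree_self⟩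
    · obtain ⟨c, hc, hyc⟩ := ih hy
      exact ⟨c, hc, Relation.ReflTransGen.head huy hyc⟩

lemma subtree_subset_of_forall (T : V → Set V) (hself : ∀ u, u ∈ T u)
    (hmono : ∀ u b, par u = some b → T u ⊆ T b) : subtree par w ⊆ T w := by
  intro u hu
  refine (?_ : T u ⊆ T w) (hself u)
  induction hu using Relation.ReflTransGen.head_induction_on with
  | refl => exact subset_rfl
  | @head u b hub _ ih => exact (hmono u b hub).trans ih

/-- `hx` says that `x` does not lie strictly inside the `par`-chain from `u` up to `w`. -/
lemma mem_subtree_of_simulate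
    (hsim : ∀ a b, a ≠ x → par a = some b → a ∈ subtree par' b)
    (h : u ∈ subtree par w) (hx : u ∈ subtree par x → x ∈ subtree par w → x = w) :
    u ∈ subtree par' w := by
  induction h using Relation.ReflTransGen.head_induction_on with
  | refl => exact mem_subtree_self
  | @head u b hub hbw ih =>
    by_cases huw : u = w
    · exact huw ▸ mem_subtree_self
    have hux : u ≠ x := by
      rintro rfl
      exact huw (hx mem_subtree_self (Relation.ReflTransGen.head hub hbw))
    refine Relation.ReflTransGen.trans (hsim u b hux hub) (ih fun hbx hxw => hx ?_ hxw)
    exact Relation.ReflTransGen.head hub hbx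

end Chains

/-- The local conditions, on each edge `u → w` of a parent map, that make it a search tree
on `G`: every subtree is connected, and `T_u` is a whole component of `T_w \ {w}`, i.e. it
avoids `w` and meets `T_w` along its boundary only in `w`. A rotation visibly preserves them,
while the recursive definition `IsSearchTree` would have to be rebuilt. -/
structure IsSTT (G : SimpleGraph V) (par : V → Option V) : Prop where
  connectedIn_subtree : ∀ u, ConnectedIn G (subtree par u)
  par_notMem_subtree : ∀ ⦃u w⦄, par u = some w → w ∉ subtree par u
  bdry_inter_subtree_subset : ∀ ⦃u w⦄, par u = some w → bdry G par u ∩ subtree par w ⊆ {w}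

section SearchTree

variable {G : SimpleGraph V} {par : V → Option V} {S : Set V} {a s r u v : V}

lemma IsSearchTree.exists_par_mem (hT : IsSearchTree G par S s) :
    ∀ u ∈ S, u ≠ s → ∃ w ∈ S, par u = some w := by
  induction hT with
  | node S s ρ hs hρ _ ih =>
    intro u hu hus
    by_cases hρu : u = ρ u
    · exact ⟨s, hs, by rw [hρu]; exact hρ u hu hus⟩
    · obtain ⟨w, hw, huw⟩ := ih u hu hus u mem_compIn_self hρu
      exact ⟨w, (compIn_subset (Set.mem_sdiff_singleton.2 ⟨hu, hus⟩) hw).1, huw⟩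

lemma IsSearchTree.par_mem_compIn (hT : IsSearchTree G par S s) (hu : u ∈ S) (hus : u ≠ s)
    (hua : par u = some a) (has : a ≠ s) : a ∈ compIn G (S \ {s}) u := by
  cases hT with
  | node _ _ ρ _ hρ hsub =>
    by_cases hρu : u = ρ u
    · rw [hρu, hρ u hu hus] at hua
      exact absurd (Option.some_injective _ hua).symm has
    · obtain ⟨b, hb, hub⟩ := (hsub u hu hus).exists_par_mem u mem_compIn_self hρu
      exact Option.some_injective _ (hub.symm.trans hua) ▸ hb

lemma IsSearchTree.mem_compIn_of_par (hT : IsSearchTree G par S s)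
    (hclosed : ∀ ⦃u w⦄, par u = some w → w ∈ S → u ∈ S) (hs : ∀ w, par s = some w → w ∉ S)
    (hv : v ∈ S) (hvs : v ≠ s) (hua : par u = some a) (ha : a ∈ compIn G (S \ {s}) v) :
    u ∈ compIn G (S \ {s}) v := by
  have haS := compIn_subset (Set.mem_sdiff_singleton.2 ⟨hv, hvs⟩) ha
  have hu := hclosed hua haS.1
  have hus : u ≠ s := by
    rintro rfl
    exact hs a hua haS.1
  have hau := hT.par_mem_compIn hu hus hua haS.2
  exact (compIn_eq_of_mem hau).symm.trans (compIn_eq_of_mem ha) ▸ mem_compIn_self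

theorem IsSearchTree.subtree_eq_and_subtree_par (hT : IsSearchTree G par S s)
    (hclosed : ∀ ⦃u w⦄, par u = some w → w ∈ S → u ∈ S) (hs : ∀ w, par s = some w → w ∉ S) :
    subtree par s = S ∧ ∀ ⦃u w⦄, par u = some w → w ∈ S →
      subtree par u = compIn G (subtree par w \ {w}) u := by
  induction hT with
  | node S s ρ hsS hρ hsub ih =>
  have hT : IsSearchTree G par S s := .node S s ρ hsS hρ hsub
  have hcomp : ∀ v ∈ S, v ≠ s → subtree par (ρ v) = compIn G (S \ {s}) v ∧
      ∀ ⦃u w⦄, par u = some w → w ∈ compIn G (S \ {s}) v →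
        subtree par u = compIn G (subtree par w \ {w}) u := by
    intro v hv hvs
    refine ih v hv hvs (fun u a hua ha => hT.mem_compIn_of_par hclosed hs hv hvs hua ha)
      (fun w hw hwv => ?_)
    rw [hρ v hv hvs, Option.some_inj] at hw
    subst hw
    exact (compIn_subset (Set.mem_sdiff_singleton.2 ⟨hv, hvs⟩) hwv).2 rfl
  have hsubtree : subtree par s = S := by
    refine Set.Subset.antisymm (subtree_subset_of_closed hsS hclosed) (fun u hu => ?_)
    by_cases hus : u = s
    · exact hus ▸ mem_subtree_self
    · have hρu : u ∈ subtree par (ρ u) := (hcomp u hu hus).1 ▸ mem_compIn_self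
      exact subtree_subset_of_par (hρ u hu hus) hρu
  refine ⟨hsubtree, fun u w huw hw => ?_⟩
  have hu := hclosed huw hw
  have hus : u ≠ s := by
    rintro rfl
    exact hs w huw hw
  by_cases hws : w = s
  · subst hws
    have hρu : u = ρ u := by
      by_contra hρu
      obtain ⟨b, hb, hub⟩ := (hsub u hu hus).exists_par_mem u mem_compIn_self hρu
      rw [huw, Option.some_inj] at hub
      subst hub
      exact (compIn_subset (Set.mem_sdiff_singleton.2 ⟨hu, hus⟩) hb).2 rfl
    have hu_comp := (hcomp u hu hus).1
    rw [← hρu] at hu_comp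
    rw [hu_comp, hsubtree]
  · exact (hcomp u hu hus).2 huw (hT.par_mem_compIn hu hus huw hws)

theorem IsSearchTree.isSTT (hG : G.Connected) (hroot : par r = none)
    (hT : IsSearchTree G par Set.univ r) : IsSTT G par := by
  obtain ⟨hsubtree, hchar⟩ :=
    hT.subtree_eq_and_subtree_par (fun _ _ _ _ => trivial) (fun _ h => by simp [hroot] at h)
  have hreach : ∀ u, u ∈ subtree par r := fun u => hsubtree ▸ trivial
  have hne : ∀ ⦃u w⦄, par u = some w → u ≠ w := by
    rintro u w huw rfl
    rw [← eq_of_par_self_of_mem_subtree huw (hreach u), hroot] at huw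
    simp at huw
  refine ⟨fun u => ?_, fun u w huw hw => ?_, fun u w huw z ⟨⟨hzu, a, ha, hza⟩, hzw⟩ => ?_⟩
  · cases hu : par u with
    | none =>
      rcases Relation.ReflTransGen.cases_head (hreach u) with rfl | ⟨_, h, _⟩
      · exact hsubtree ▸ connectedIn_univ hG
      · simp [hu] at h
    | some w => exact hchar hu trivial ▸ connectedIn_compIn
  · rw [hchar huw trivial] at hw
    rcases eq_or_mem_of_mem_compIn hw with h | h
    exacts [hne huw h.symm, h.2 rfl]
  · by_contra hzw'
    rw [hchar huw trivial] at ha hzu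
    have ha' : a ∈ subtree par w \ {w} := (eq_or_mem_of_mem_compIn ha).elim
      (fun h => h ▸ ⟨mem_subtree_of_par huw, hne huw⟩) id
    exact hzu (Relation.ReflTransGen.tail ha ⟨ha', ⟨hzw, hzw'⟩, hza.symm⟩)

end SearchTree

namespace IsSTT

variable {G : SimpleGraph V} {par : V → Option V} {c c' u v w : V}

lemma ne_of_par (hS : IsSTT G par) (h : par u = some w) : u ≠ w := by
  rintro rfl
  exact hS.par_notMem_subtree h mem_subtree_self

lemma par_par_ne (hS : IsSTT G par) (h : par u = some w) : par w ≠ some u :=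
  fun h' => hS.par_notMem_subtree h' (mem_subtree_of_par h)

lemma subtree_subset_diff (hS : IsSTT G par) (h : par u = some w) :
    subtree par u ⊆ subtree par w \ {w} := fun _ hz =>
  ⟨subtree_subset_of_par h hz, by rintro rfl; exact hS.par_notMem_subtree h hz⟩

lemma bdry_subset_insert (hS : IsSTT G par) (h : par u = some w) :
    bdry G par u ⊆ insert w (bdry G par w) := by
  rintro z ⟨hzu, a, ha, hza⟩
  by_cases hzw : z ∈ subtree par w
  · exact Or.inl (hS.bdry_inter_subtree_subset h ⟨⟨hzu, a, ha, hza⟩, hzw⟩)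
  · exact Or.inr ⟨hzw, a, subtree_subset_of_par h ha, hza⟩

lemma par_mem_bdry (hS : IsSTT G par) (h : par u = some w) : w ∈ bdry G par u := by
  have hreach := hS.connectedIn_subtree w u (mem_subtree_of_par h) w mem_subtree_self
  obtain ⟨a, ha, z, hzw, hzu, haz⟩ :=
    hreach.exists_adj_of_mem_of_notMem mem_subtree_self (hS.par_notMem_subtree h)
  have hz : z ∈ bdry G par u := ⟨hzu, a, ha, haz.symm⟩
  obtain rfl := hS.bdry_inter_subtree_subset h ⟨hz, hzw⟩
  exact hz

lemma disjoint_subtree (hS : IsSTT G par) (hc : par c = some v) (hc' : par c' = some v)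
    (hne : c ≠ c') : Disjoint (subtree par c) (subtree par c') := by
  refine Set.disjoint_left.2 fun z hz hz' => ?_
  rcases mem_subtree_or_mem_subtree hz hz' with h | h
  · exact hS.par_notMem_subtree hc' (par_mem_subtree h hne hc)
  · exact hS.par_notMem_subtree hc (par_mem_subtree h hne.symm hc')

lemma reachIn_of_mem_bdry (hS : IsSTT G par) {A : Set V} {a p : V} (hcA : subtree par c ⊆ A)
    (hpA : p ∈ A) (hp : p ∈ bdry G par c) (ha : a ∈ subtree par c) : reachIn G A a p := by
  obtain ⟨-, z, hz, hpz⟩ := hp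
  exact ((hS.connectedIn_subtree c a ha z hz).mono hcA).tail ⟨hcA hz, hpA, hpz.symm⟩

end IsSTT

section Rotate

variable {G : SimpleGraph V} {par : V → Option V} {x p u w : V}

def movedSet (G : SimpleGraph V) (par : V → Option V) (x p : V) : Set V :=
  {u | ∃ c, par c = some x ∧ p ∈ bdry G par c ∧ u ∈ subtree par c}

open Classical in
noncomputable def rotSubtree (G : SimpleGraph V) (par : V → Option V) (x p w : V) : Set V :=
  if w = x then subtree par p
  else if w = p then subtree par p \ subtree par x ∪ movedSet G par x p
  else subtree par w

lemma rotate_self : rotate G par x p x = par p := by simp [rotate]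

lemma rotate_of_not_moved (hux : u ≠ x) (hup : u ≠ p)
    (hmov : ¬(par u = some x ∧ p ∈ bdry G par u)) : rotate G par x p u = par u := by
  simp only [rotate, if_neg hux, if_neg hup, if_neg hmov]

lemma rotSubtree_self : rotSubtree G par x p x = subtree par p := if_pos rfl

lemma rotSubtree_of_ne (hwx : w ≠ x) (hwp : w ≠ p) : rotSubtree G par x p w = subtree par w := by
  rw [rotSubtree, if_neg hwx, if_neg hwp]

variable (hS : IsSTT G par) (hxp : par x = some p)
include hS hxp

lemma rotate_parent : rotate G par x p p = some x := by
  simp [rotate, (hS.ne_of_par hxp).symm]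

lemma rotate_of_moved (hu : par u = some x) (hb : p ∈ bdry G par u) :
    rotate G par x p u = some p := by
  have hup : u ≠ p := by
    rintro rfl
    exact hS.par_par_ne hxp hu
  simp [rotate, hS.ne_of_par hu, hup, hu, hb]

lemma rotSubtree_parent :
    rotSubtree G par x p p = subtree par p \ subtree par x ∪ movedSet G par x p := by
  rw [rotSubtree, if_neg (hS.ne_of_par hxp).symm, if_pos rfl]

omit hxp in
lemma movedSet_subset : movedSet G par x p ⊆ subtree par x \ {x} := by
  rintro u ⟨c, hc, -, hu⟩
  exact hS.subtree_subset_diff hc hu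

lemma rotSubtree_parent_subset : rotSubtree G par x p p ⊆ subtree par p \ {x} := by
  rw [rotSubtree_parent hS hxp]
  rintro u (⟨hup, hux⟩ | hu)
  · exact ⟨hup, fun h => hux (h ▸ mem_subtree_self)⟩
  · exact ⟨subtree_subset_of_par hxp (movedSet_subset hS hu).1, (movedSet_subset hS hu).2⟩

lemma mem_rotSubtree_self : u ∈ rotSubtree G par x p u := by
  by_cases hux : u = x
  · subst hux
    exact rotSubtree_self (G := G) ▸ mem_subtree_of_par hxp
  by_cases hup : u = p
  · subst hup
    rw [rotSubtree_parent hS hxp]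
    exact Or.inl ⟨mem_subtree_self, hS.par_notMem_subtree hxp⟩
  · exact (rotSubtree_of_ne hux hup).symm ▸ mem_subtree_self

lemma rotSubtree_subset_of_rotate (h : rotate G par x p u = some w) :
    rotSubtree G par x p u ⊆ rotSubtree G par x p w := by
  by_cases hux : u = x
  · subst hux
    rw [rotate_self] at h
    have hwu : w ≠ u := by
      rintro rfl
      exact hS.par_par_ne hxp h
    rw [rotSubtree_self, rotSubtree_of_ne hwu (hS.ne_of_par h).symm]
    exact subtree_subset_of_par h
  by_cases hup : u = p
  · subst hup
    rw [rotate_parent hS hxp, Option.some_inj] at h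
    subst h
    exact (rotSubtree_parent_subset hS hxp).trans (rotSubtree_self (G := G) ▸ Set.sdiff_subset)
  rw [rotSubtree_of_ne hux hup]
  by_cases hmov : par u = some x ∧ p ∈ bdry G par u
  · rw [rotate_of_moved hS hxp hmov.1 hmov.2, Option.some_inj] at h
    subst h
    rw [rotSubtree_parent hS hxp]
    exact fun z hz => Or.inr ⟨u, hmov.1, hmov.2, hz⟩
  rw [rotate_of_not_moved hux hup hmov] at h
  by_cases hwx : w = x
  · subst w
    rw [rotSubtree_self]
    exact (subtree_subset_of_par h).trans (subtree_subset_of_par hxp)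
  by_cases hwp : w = p
  · subst hwp
    rw [rotSubtree_parent hS hxp]
    exact fun z hz => Or.inl ⟨subtree_subset_of_par h hz,
      Set.disjoint_left.1 (hS.disjoint_subtree h hxp hux) hz⟩
  · exact rotSubtree_of_ne (G := G) hwx hwp ▸ subtree_subset_of_par h

lemma mem_subtree_rotate_of_par {a b : V} (hax : a ≠ x) (hab : par a = some b) :
    a ∈ subtree (rotate G par x p) b := by
  by_cases hap : a = p
  · subst hap
    exact Relation.ReflTransGen.head (rotate_parent hS hxp)
      (mem_subtree_of_par (rotate_self.trans hab))
  by_cases hmov : par a = some x ∧ p ∈ bdry G par a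
  · rw [hmov.1, Option.some_inj] at hab
    subst hab
    exact Relation.ReflTransGen.head (rotate_of_moved hS hxp hmov.1 hmov.2)
      (mem_subtree_of_par (rotate_parent hS hxp))
  · exact mem_subtree_of_par ((rotate_of_not_moved hax hap hmov).trans hab)

lemma rotSubtree_subset_subtree_rotate :
    rotSubtree G par x p w ⊆ subtree (rotate G par x p) w := by
  have transfer : ∀ {u w}, u ∈ subtree par w → (u ∈ subtree par x → x ∈ subtree par w → x = w) →
      u ∈ subtree (rotate G par x p) w := fun h hx =>
    mem_subtree_of_simulate (fun _ _ ha hab => mem_subtree_rotate_of_par hS hxp ha hab) h hx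
  intro u hu
  by_cases hwx : w = x
  · subst w
    rw [rotSubtree_self] at hu
    by_cases hux : u ∈ subtree par x
    · exact transfer hux fun _ _ => rfl
    · exact (transfer hu fun h => absurd h hux).trans
        (mem_subtree_of_par (rotate_parent hS hxp))
  by_cases hwp : w = p
  · subst w
    rw [rotSubtree_parent hS hxp] at hu
    rcases hu with ⟨hup, hux⟩ | ⟨c, hc, hb, huc⟩
    · exact transfer hup fun h => absurd h hux
    · exact (transfer huc fun _ hxc => absurd hxc (hS.par_notMem_subtree hc)).trans
        (mem_subtree_of_par (rotate_of_moved hS hxp hc hb))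
  rw [rotSubtree_of_ne hwx hwp] at hu
  by_cases hx : u ∈ subtree par x ∧ x ∈ subtree par w
  · have hpw := par_mem_subtree hx.2 (Ne.symm hwx) hxp
    obtain ⟨q, hpq, hqw⟩ : ∃ q, par p = some q ∧ q ∈ subtree par w := by
      rcases Relation.ReflTransGen.cases_head hpw with h | h
      exacts [absurd h (Ne.symm hwp), h]
    have hq : q ∉ subtree par x := fun hq =>
      hS.par_notMem_subtree hpq (subtree_subset_of_par hxp hq)
    exact (transfer hx.1 fun _ _ => rfl).trans <| Relation.ReflTransGen.head
      (rotate_self.trans hpq) (transfer hqw fun h => absurd h hq)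
  · exact transfer hu fun hux hxw => absurd ⟨hux, hxw⟩ hx

lemma subtree_rotate : subtree (rotate G par x p) w = rotSubtree G par x p w :=
  Set.Subset.antisymm
    (subtree_subset_of_forall _ (fun _ => mem_rotSubtree_self hS hxp)
      (fun _ _ h => rotSubtree_subset_of_rotate hS hxp h))
    (rotSubtree_subset_subtree_rotate hS hxp)

lemma bdry_rotate_self : bdry G (rotate G par x p) x = bdry G par p := by
  simp only [bdry, subtree_rotate hS hxp, rotSubtree_self]

lemma bdry_rotate_of_ne (hwx : w ≠ x) (hwp : w ≠ p) :
    bdry G (rotate G par x p) w = bdry G par w := by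
  simp only [bdry, subtree_rotate hS hxp, rotSubtree_of_ne hwx hwp]

end Rotate

section RotateIsSTT

variable {G : SimpleGraph V} {par : V → Option V} {x p u w : V}
variable (hS : IsSTT G par) (hxp : par x = some p)
include hS hxp

lemma bdry_child_subset {c : V} (hc : par c = some x) :
    bdry G par c ⊆ insert x (insert p (bdry G par p)) :=
  (hS.bdry_subset_insert hc).trans (Set.insert_subset_insert (hS.bdry_subset_insert hxp))

lemma bdry_rotate_parent_subset : bdry G (rotate G par x p) p ⊆ insert x (bdry G par p) := by
  rintro z ⟨hz, a, ha, hza⟩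
  rw [subtree_rotate hS hxp, rotSubtree_parent hS hxp] at hz ha
  rcases ha with ⟨hap, hax⟩ | ⟨c, hc, hpc, hac⟩
  · by_cases hzp : z ∈ subtree par p
    · left
      have hzx : z ∈ subtree par x := by_contra fun h => hz (Or.inl ⟨hzp, h⟩)
      by_contra hzx'
      obtain ⟨c, hc, hzc⟩ := exists_child_of_mem_subtree hzx hzx'
      have hac : a ∈ bdry G par c := ⟨fun h => hax (subtree_subset_of_par hc h), z, hzc, hza.symm⟩
      rcases bdry_child_subset hS hxp hc hac with rfl | rfl | ha
      · exact hax mem_subtree_self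
      · exact hz (Or.inr ⟨c, hc, hac, hzc⟩)
      · exact ha.1 hap
    · exact Or.inr ⟨hzp, a, hap, hza⟩
  · have hzc : z ∉ subtree par c := fun h => hz (Or.inr ⟨c, hc, hpc, h⟩)
    rcases bdry_child_subset hS hxp hc ⟨hzc, a, hac, hza⟩ with rfl | rfl | hzp
    · exact Or.inl rfl
    · exact absurd (Or.inl ⟨mem_subtree_self, hS.par_notMem_subtree hxp⟩) hz
    · exact Or.inr hzp

lemma connectedIn_rotSubtree_parent : ConnectedIn G (rotSubtree G par x p p) := by
  suffices h : ∀ a ∈ rotSubtree G par x p p, reachIn G (rotSubtree G par x p p) a p from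
    fun a ha b hb => (h a ha).trans (h b hb).symm
  rw [rotSubtree_parent hS hxp]
  have hp : p ∈ subtree par p \ subtree par x ∪ movedSet G par x p :=
    Or.inl ⟨mem_subtree_self, hS.par_notMem_subtree hxp⟩
  rintro a (⟨hap, hax⟩ | ⟨c, hc, hpc, hac⟩)
  · by_cases ha : a = p
    · exact ha ▸ .refl
    obtain ⟨c, hc, hac⟩ := exists_child_of_mem_subtree hap ha
    have hcx : c ≠ x := by
      rintro rfl
      exact hax hac
    refine hS.reachIn_of_mem_bdry (fun z hz => Or.inl ⟨subtree_subset_of_par hc hz, ?_⟩) hp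
      (hS.par_mem_bdry hc) hac
    exact Set.disjoint_left.1 (hS.disjoint_subtree hc hxp hcx) hz
  · exact hS.reachIn_of_mem_bdry (fun z hz => Or.inr ⟨c, hc, hpc, hz⟩) hp hpc hac

lemma par_notMem_subtree_rotate (h : rotate G par x p u = some w) :
    w ∉ subtree (rotate G par x p) u := by
  rw [subtree_rotate hS hxp]
  by_cases hux : u = x
  · subst u
    rw [rotate_self] at h
    rw [rotSubtree_self]
    exact hS.par_notMem_subtree h
  by_cases hup : u = p
  · subst u
    rw [rotate_parent hS hxp, Option.some_inj] at h
    subst w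
    exact fun hx => (rotSubtree_parent_subset hS hxp hx).2 rfl
  rw [rotSubtree_of_ne hux hup]
  by_cases hmov : par u = some x ∧ p ∈ bdry G par u
  · rw [rotate_of_moved hS hxp hmov.1 hmov.2, Option.some_inj] at h
    subst w
    exact fun hp => hS.par_notMem_subtree hxp (hS.subtree_subset_diff hmov.1 hp).1
  · rw [rotate_of_not_moved hux hup hmov] at h
    exact hS.par_notMem_subtree h

lemma bdry_inter_subtree_subset_rotate (h : rotate G par x p u = some w) :
    bdry G (rotate G par x p) u ∩ subtree (rotate G par x p) w ⊆ {w} := by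
  rintro z ⟨hzu, hzw⟩
  rw [subtree_rotate hS hxp] at hzw
  by_cases hux : u = x
  · subst u
    rw [rotate_self] at h
    have hwx : w ≠ x := by
      rintro rfl
      exact hS.par_par_ne hxp h
    rw [bdry_rotate_self hS hxp] at hzu
    rw [rotSubtree_of_ne hwx (hS.ne_of_par h).symm] at hzw
    exact hS.bdry_inter_subtree_subset h ⟨hzu, hzw⟩
  by_cases hup : u = p
  · subst u
    rw [rotate_parent hS hxp, Option.some_inj] at h
    subst w
    rw [rotSubtree_self] at hzw
    exact (bdry_rotate_parent_subset hS hxp hzu).resolve_right fun hz => hz.1 hzw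
  rw [bdry_rotate_of_ne hS hxp hux hup] at hzu
  by_cases hmov : par u = some x ∧ p ∈ bdry G par u
  · rw [rotate_of_moved hS hxp hmov.1 hmov.2, Option.some_inj] at h
    subst w
    have hz := rotSubtree_parent_subset hS hxp hzw
    rcases bdry_child_subset hS hxp hmov.1 hzu with rfl | rfl | hzp
    exacts [absurd rfl hz.2, rfl, absurd hz.1 hzp.1]
  rw [rotate_of_not_moved hux hup hmov] at h
  by_cases hwx : w = x
  · subst w
    rw [rotSubtree_self] at hzw
    rcases bdry_child_subset hS hxp h hzu with rfl | rfl | hzp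
    exacts [rfl, absurd ⟨h, hzu⟩ hmov, absurd hzw hzp.1]
  by_cases hwp : w = p
  · subst w
    rcases hS.bdry_subset_insert h hzu with rfl | hzp
    exacts [rfl, absurd (rotSubtree_parent_subset hS hxp hzw).1 hzp.1]
  · rw [rotSubtree_of_ne hwx hwp] at hzw
    exact hS.bdry_inter_subtree_subset h ⟨hzu, hzw⟩

theorem IsSTT.rotate : IsSTT G (rotate G par x p) where
  connectedIn_subtree w := by
    rw [subtree_rotate hS hxp]
    by_cases hwx : w = x
    · subst w
      exact rotSubtree_self (G := G) ▸ hS.connectedIn_subtree p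
    by_cases hwp : w = p
    · subst w
      exact connectedIn_rotSubtree_parent hS hxp
    · exact rotSubtree_of_ne (G := G) hwx hwp ▸ hS.connectedIn_subtree w
  par_notMem_subtree _ _ h := par_notMem_subtree_rotate hS hxp h
  bdry_inter_subtree_subset _ _ h := bdry_inter_subtree_subset_rotate hS hxp h

end RotateIsSTT

section TwoCut

variable [Finite V] {G : SimpleGraph V} {par : V → Option V} {x p b : V}
variable (hS : IsSTT G par) (hxp : par x = some p)
include hS hxp

lemma notMem_bdry_rotate_parent (hG : G.IsAcyclic) (h2 : TwoCut G par)
    (hb : b ∈ bdry G par x) (hbp : b ≠ p) : b ∉ bdry G (rotate G par x p) p := by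
  have hbp' : b ∉ subtree par p := fun h => hbp ((hS.bdry_subset_insert hxp hb).resolve_right
    fun hb' => hb'.1 h)
  obtain ⟨-, a', ha', hba'⟩ := hb
  rintro ⟨-, a, ha, hba⟩
  rw [subtree_rotate hS hxp, rotSubtree_parent hS hxp] at ha
  rcases ha with ⟨hap, hax⟩ | ⟨c, hc, hpc, hac⟩
  · exact hax (hG.eq_of_adj_of_connectedIn (hS.connectedIn_subtree p) hbp' hap
      (subtree_subset_of_par hxp ha') hba hba' ▸ ha')
  · have hbc : b ∈ bdry G par c := ⟨fun h => hbp' (subtree_subset_of_par hxp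
      (subtree_subset_of_par hc h)), a, hac, hba⟩
    have hxb : x ≠ b := fun h => hbp' (h ▸ mem_subtree_of_par hxp)
    have h3 : 2 < (bdry G par c).ncard := (Set.two_lt_ncard_iff (Set.toFinite _)).2
      ⟨x, p, b, hS.par_mem_bdry hc, hpc, hbc, hS.ne_of_par hxp, hxb, hbp.symm⟩
    exact absurd (h2 c) (not_le.2 h3)

lemma ncard_bdry_rotate_parent_le (hG : G.IsAcyclic) (h2 : TwoCut G par)
    (hsx : (bdry G par x).ncard = 2) : (bdry G (rotate G par x p) p).ncard ≤ 2 := by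
  obtain ⟨b, hb, hbp⟩ := Set.exists_ne_of_one_lt_ncard (hsx ▸ one_lt_two) p
  have hb' : b ∈ bdry G par p := (hS.bdry_subset_insert hxp hb).resolve_left hbp
  have hsub : bdry G (rotate G par x p) p ⊆ insert x (bdry G par p \ {b}) := fun z hz =>
    (bdry_rotate_parent_subset hS hxp hz).imp_right fun hzp => ⟨hzp, by
      rintro rfl
      exact notMem_bdry_rotate_parent hS hxp hG h2 hb hbp hz⟩
  calc (bdry G (rotate G par x p) p).ncard
      ≤ (insert x (bdry G par p \ {b})).ncard := Set.ncard_le_ncard hsub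
    _ ≤ (bdry G par p \ {b}).ncard + 1 := Set.ncard_insert_le _ _
    _ = (bdry G par p).ncard - 1 + 1 := by rw [Set.ncard_sdiff_singleton_of_mem hb']
    _ ≤ 2 := by have := h2 p; omega

theorem twoCut_rotate (hG : G.IsAcyclic) (h2 : TwoCut G par)
    (hsx : (bdry G par x).ncard = 2) : TwoCut G (rotate G par x p) := by
  intro w
  by_cases hwx : w = x
  · subst w
    rw [bdry_rotate_self hS hxp]
    exact h2 p
  by_cases hwp : w = p
  · subst w
    exact ncard_bdry_rotate_parent_le hS hxp hG h2 hsx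
  · rw [bdry_rotate_of_ne hS hxp hwx hwp]
    exact h2 w

end TwoCut

theorem splayStep_at_grandparent_allowed_general [Fintype V] (G : SimpleGraph V)
    (hG : G.IsTree) (par : V → Option V) (r : V) (hroot : par r = none)
    (hT : IsSearchTree G par Set.univ r) (h2 : TwoCut G par)
    (g h i : V)
    (hgh : par g = some h) (hhi : par h = some i)
    (hsg : (bdry G par g).ncard = 2) (hsh : (bdry G par h).ncard = 2) :
    TwoCut G (splayStep G par g) := by
  have hS : IsSTT G par := hT.isSTT hG.connected hroot
  have hzigzag : splayStep G par g = rotate G (rotate G par g h) g i := by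
    simp only [splayStep, hgh, hhi, if_pos hsg]
  have hgi : rotate G par g h g = some i := rotate_self.trans hhi
  have hsg' : (bdry G (rotate G par g h) g).ncard = 2 := by
    rw [bdry_rotate_self hS hgh, hsh]
  rw [hzigzag]
  exact twoCut_rotate (hS.rotate hgh) hgi hG.isAcyclic
    (twoCut_rotate hS hgh hG.isAcyclic h2 hsg) hsg'

/-- In a 2-cut STT, if `v` has parent `p` and grandparent `g`, where `g`
has parent `h` and grandparent `i`, and `g`, `h`, `i` are all separators, then the
splay step at `g` preserves the 2-cut property. -/
theorem splayStep_at_grandparent_allowed [Fintype V] (G : SimpleGraph V)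
    (hG : G.IsTree) (par : V → Option V) (r : V) (hroot : par r = none)
    (hT : IsSearchTree G par Set.univ r) (h2 : TwoCut G par)
    (v p g h i : V) (hvp : par v = some p) (hpg : par p = some g)
    (hgh : par g = some h) (hhi : par h = some i)
    (hsg : (bdry G par g).ncard = 2) (hsh : (bdry G par h).ncard = 2)
    (hsi : (bdry G par i).ncard = 2) :
    TwoCut G (splayStep G par g) :=
  splayStep_at_grandparent_allowed_general G hG par r hroot hT h2 g h i hgh hhi hsg hsh
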